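/- arXiv:2605.31288 — 4 statements merged into one kernel-verified Lean document; each statement's English description precedes it below -/
import Mathlib

section
/- Let I_ξ = [−√3, √3], I ⊂ ℝ a compact interval, μ̄ ∈ ℝ and σ > 0 with μ̄ + σz ∈ I for all z ∈ I_ξ, and let f : ℝⁿ × I → ℝⁿ be continuous. Suppose there exists a constant vector c ∈ ℝⁿ \ {0} such that ⟨f(u, μ̄ + σz), c⟩ > 0 for all u ∈ ℝⁿ and z ∈ I_ξ. Let V ⊆ C(I_ξ; ℝⁿ) be a linear subspace containing all constant functions. Then there is no u ∈ V such that ∫_{I_ξ} ⟨f(u(z), μ̄ + σz), v(z)⟩ dz = 0 for all v ∈ V. -/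
open MeasureTheory
open scoped Matrix

/-- **Non-existence for the Galerkin projection.**
Let `I_ξ = [−√3, √3]`, `μ̄ + σz ∈ I = [a, b]` for `z ∈ I_ξ`, `f : ℝⁿ × I → ℝⁿ`
continuous, and suppose there is `c ≠ 0` with `⟨f(u, μ̄ + σz), c⟩ > 0` for all
`u ∈ ℝⁿ`, `z ∈ I_ξ`. If `V ⊆ C(I_ξ; ℝⁿ)` is a linear subspace containing all
constant functions, then no `u ∈ V` satisfies
`∫_{I_ξ} ⟨f(u(z), μ̄ + σz), v(z)⟩ dz = 0` for all `v ∈ V`. -/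
theorem galerkin_nonexistence {n : ℕ} (a b : ℝ) (hab : a ≤ b)
    (μbar σ : ℝ) (hσ : 0 < σ)
    (hrange : ∀ z ∈ Set.Icc (-Real.sqrt 3) (Real.sqrt 3), μbar + σ * z ∈ Set.Icc a b)
    (f : (Fin n → ℝ) → ℝ → (Fin n → ℝ))
    (hf : ContinuousOn (fun p : (Fin n → ℝ) × ℝ => f p.1 p.2)
      (Set.univ ×ˢ Set.Icc a b))
    (c : Fin n → ℝ) (hc : c ≠ 0)
    (hpos : ∀ u : Fin n → ℝ, ∀ z ∈ Set.Icc (-Real.sqrt 3) (Real.sqrt 3),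
      0 < f u (μbar + σ * z) ⬝ᵥ c)
    (V : Submodule ℝ (ℝ → Fin n → ℝ))
    (hVcont : ∀ v ∈ V, ContinuousOn v (Set.Icc (-Real.sqrt 3) (Real.sqrt 3)))
    (hVconst : ∀ w : Fin n → ℝ, (fun _ : ℝ => w) ∈ V) :
    ¬ ∃ u ∈ V, ∀ v ∈ V, ∫ z in Set.Icc (-Real.sqrt 3) (Real.sqrt 3),
      f (u z) (μbar + σ * z) ⬝ᵥ v z = 0 := by
  rintro ⟨u, hu, hint⟩
  set S : Set ℝ := Set.Icc (-Real.sqrt 3) (Real.sqrt 3) with hS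
  have hs3 : 0 < Real.sqrt 3 := Real.sqrt_pos.2 (by norm_num)
  have hne : S.Nonempty := ⟨0, by constructor <;> [linarith; linarith]⟩
  have hcomp : IsCompact S := isCompact_Icc
  -- continuity of the integrand
  have hg : ContinuousOn (fun z => f (u z) (μbar + σ * z) ⬝ᵥ c) S := by
    have h1 : ContinuousOn (fun z => (u z, μbar + σ * z)) S :=
      (hVcont u hu).prodMk (Continuous.continuousOn (by continuity))
    have h2 : ContinuousOn (fun z => f (u z) (μbar + σ * z)) S := by
      apply hf.comp h1
      intro z hz
      exact ⟨trivial, hrange z hz⟩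
    simp only [dotProduct]
    apply continuousOn_finset_sum
    intro i _
    exact ((continuous_apply i).comp_continuousOn h2).mul continuousOn_const
  have hmeas : MeasurableSet S := measurableSet_Icc
  have hInt : IntegrableOn (fun z => f (u z) (μbar + σ * z) ⬝ᵥ c) S :=
    hg.integrableOn_compact hcomp
  -- min value
  obtain ⟨z₀, hz₀, hmin⟩ := hcomp.exists_isMinOn hne hg
  set m := f (u z₀) (μbar + σ * z₀) ⬝ᵥ c with hm
  have hmpos : 0 < m := hpos (u z₀) z₀ hz₀
  have hle : m * (volume S).toReal ≤ ∫ z in S, f (u z) (μbar + σ * z) ⬝ᵥ c := by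
    have key := MeasureTheory.setIntegral_ge_of_const_le (c := m) hmeas (hcomp.measure_ne_top) ?_ hInt
    · rw [smul_eq_mul, Measure.real, mul_comm] at key
      exact key
    intro z hz
    exact hmin hz
  have hvol : 0 < (volume S).toReal := by
    rw [hS, Real.volume_Icc, ENNReal.toReal_ofReal (by linarith)]
    linarith
  have h0 : ∫ z in S, f (u z) (μbar + σ * z) ⬝ᵥ c = 0 := hint _ (hVconst c)
  rw [h0] at hle
  nlinarith
end

section
/- Let P ∈ ℝ^{n×n} be symmetric positive definite with weighted inner product ⟨·,·⟩_P and norm ‖·‖_P. Let ū, u, w, a, b ∈ ℝⁿ and ρ > 0, m > 0, C > 0, ε ∈ (0, m/4) satisfy: ‖u − ū‖_P ≥ ρ, ‖w − ū‖_P < ρ, ‖w − ū‖_P ≤ 1/(2C), ⟨a, u − ū⟩_P ≥ m ‖u − ū‖_P, ‖a‖_P ≤ C ⟨a, u − ū⟩_P, and ‖b‖_P < ε. Then ⟨a − b, u − w⟩_P ≥ (m/2 − 2ε) ‖u − ū‖_P > 0. -/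
open scoped Matrix

/-- The weighted inner product `⟨v, w⟩_P := vᵀ P w` on `ℝⁿ` induced by a matrix `P`. -/
noncomputable def pInner {n : ℕ} (P : Matrix (Fin n) (Fin n) ℝ) (v w : Fin n → ℝ) : ℝ :=
  v ⬝ᵥ P.mulVec w

/-- The weighted norm `‖v‖_P := √(vᵀ P v)` induced by a matrix `P`. -/
noncomputable def pNorm {n : ℕ} (P : Matrix (Fin n) (Fin n) ℝ) (v : Fin n → ℝ) : ℝ :=
  Real.sqrt (pInner P v v)

open scoped MatrixOrder

lemma pInner_eq_sqrt {n : ℕ} {P : Matrix (Fin n) (Fin n) ℝ} (hP : P.PosDef)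
    (v w : Fin n → ℝ) :
    pInner P v w = ((CFC.sqrt P).mulVec v) ⬝ᵥ ((CFC.sqrt P).mulVec w) := by
  set S := CFC.sqrt P with hS
  have hSS : S * S = P := CFC.sqrt_mul_sqrt_self P hP.posSemidef.nonneg
  have hSym : Sᵀ = S := by
    have := (Matrix.nonneg_iff_posSemidef.mp (CFC.sqrt_nonneg P)).1
    rw [← Matrix.conjTranspose_eq_transpose_of_trivial]; exact this
  calc pInner P v w = v ⬝ᵥ (S * S).mulVec w := by rw [hSS]; rfl
    _ = v ⬝ᵥ S.mulVec (S.mulVec w) := by rw [← Matrix.mulVec_mulVec]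
    _ = (S.mulVec v) ⬝ᵥ (S.mulVec w) := by
        rw [Matrix.dotProduct_mulVec, ← Matrix.mulVec_transpose, hSym]

lemma pNorm_eq_sqrt {n : ℕ} {P : Matrix (Fin n) (Fin n) ℝ} (hP : P.PosDef)
    (v : Fin n → ℝ) :
    pNorm P v = Real.sqrt (∑ i, ((CFC.sqrt P).mulVec v i) ^ 2) := by
  rw [pNorm, pInner_eq_sqrt hP]
  congr 1
  simp [dotProduct, sq]

lemma pNorm_nonneg {n : ℕ} (P : Matrix (Fin n) (Fin n) ℝ) (v : Fin n → ℝ) :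
    0 ≤ pNorm P v := Real.sqrt_nonneg _

/-- Cauchy–Schwarz for the weighted inner product. -/
lemma pInner_le_pNorm_mul_pNorm {n : ℕ} {P : Matrix (Fin n) (Fin n) ℝ} (hP : P.PosDef)
    (v w : Fin n → ℝ) :
    pInner P v w ≤ pNorm P v * pNorm P w := by
  rw [pInner_eq_sqrt hP, pNorm_eq_sqrt hP, pNorm_eq_sqrt hP]
  simpa [dotProduct] using
    Real.sum_mul_le_sqrt_mul_sqrt Finset.univ
      (fun i => (CFC.sqrt P).mulVec v i) (fun i => (CFC.sqrt P).mulVec w i)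

lemma pInner_sub_left {n : ℕ} (P : Matrix (Fin n) (Fin n) ℝ) (x y z : Fin n → ℝ) :
    pInner P (x - y) z = pInner P x z - pInner P y z := by
  simp [pInner, sub_dotProduct]

lemma pInner_sub_right {n : ℕ} (P : Matrix (Fin n) (Fin n) ℝ) (x y z : Fin n → ℝ) :
    pInner P x (y - z) = pInner P x y - pInner P x z := by
  simp [pInner, Matrix.mulVec_sub, dotProduct_sub]

lemma pNorm_sub_comm {n : ℕ} (P : Matrix (Fin n) (Fin n) ℝ) (x y : Fin n → ℝ) :
    pNorm P (x - y) = pNorm P (y - x) := by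
  unfold pNorm
  congr 1
  rw [pInner_sub_left, pInner_sub_right, pInner_sub_right,
    pInner_sub_left, pInner_sub_right, pInner_sub_right]
  ring

/-- **Key estimate in the uniqueness argument for the Galerkin projection.**
Under the listed geometric hypotheses (with `a` the field at `u` and `b` the field at
`w`), one has `⟨a − b, u − w⟩_P ≥ (m/2 − 2ε)‖u − ū‖_P > 0`. -/
theorem uniqueness_key_estimate {n : ℕ}
    (P : Matrix (Fin n) (Fin n) ℝ) (hP : P.PosDef)
    (ub u w a b : Fin n → ℝ) (ρ m C ε : ℝ)
    (hρ : 0 < ρ) (hm : 0 < m) (hC : 0 < C) (hε1 : 0 < ε) (hε2 : ε < m / 4)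
    (h1 : ρ ≤ pNorm P (u - ub))
    (h2 : pNorm P (w - ub) < ρ)
    (h3 : pNorm P (w - ub) ≤ 1 / (2 * C))
    (h4 : m * pNorm P (u - ub) ≤ pInner P a (u - ub))
    (h5 : pNorm P a ≤ C * pInner P a (u - ub))
    (h6 : pNorm P b < ε) :
    (m / 2 - 2 * ε) * pNorm P (u - ub) ≤ pInner P (a - b) (u - w) ∧
      0 < (m / 2 - 2 * ε) * pNorm P (u - ub) := by
  set N := pNorm P (u - ub) with hN
  have hN0 : 0 < N := lt_of_lt_of_le hρ h1
  have hA : 0 < pInner P a (u - ub) := lt_of_lt_of_le (by positivity) h4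
  -- expand the inner product
  have hsplit : pInner P (a - b) (u - w)
      = pInner P a (u - ub) - pInner P a (w - ub)
        - pInner P b (u - ub) + pInner P b (w - ub) := by
    have huw : u - w = (u - ub) - (w - ub) := by abel
    rw [huw, pInner_sub_right, pInner_sub_left, pInner_sub_left]
    ring
  -- bound ⟨a, w−ū⟩ ≤ A/2
  have hb1 : pInner P a (w - ub) ≤ pInner P a (u - ub) / 2 := by
    calc pInner P a (w - ub) ≤ pNorm P a * pNorm P (w - ub) :=
          pInner_le_pNorm_mul_pNorm hP _ _
      _ ≤ (C * pInner P a (u - ub)) * (1 / (2 * C)) :=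
          mul_le_mul h5 h3 (pNorm_nonneg _ _) (by positivity)
      _ = pInner P a (u - ub) / 2 := by field_simp
  -- bound ⟨b, u−ū⟩ ≤ ε N
  have hb2 : pInner P b (u - ub) ≤ ε * N := by
    calc pInner P b (u - ub) ≤ pNorm P b * N := pInner_le_pNorm_mul_pNorm hP _ _
      _ ≤ ε * N := mul_le_mul_of_nonneg_right h6.le hN0.le
  -- bound −⟨b, w−ū⟩ ≤ ε N
  have hb3 : -pInner P b (w - ub) ≤ ε * N := by
    have : -pInner P b (w - ub) = pInner P b (ub - w) := by
      have h0 : pInner P b (0 : Fin n → ℝ) = 0 := by simp [pInner]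
      have := pInner_sub_right P b (0 : Fin n → ℝ) (w - ub)
      simp only [h0, zero_sub] at this
      rw [← this]
      congr 1
      abel
    rw [this]
    calc pInner P b (ub - w) ≤ pNorm P b * pNorm P (ub - w) :=
          pInner_le_pNorm_mul_pNorm hP _ _
      _ = pNorm P b * pNorm P (w - ub) := by rw [pNorm_sub_comm]
      _ ≤ ε * N := by
          apply mul_le_mul h6.le (le_trans h2.le (le_trans h1 le_rfl))
            (pNorm_nonneg _ _) hε1.le
  have hmain : (m / 2 - 2 * ε) * N ≤ pInner P (a - b) (u - w) := by
    rw [hsplit]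
    have := h4
    nlinarith [hb1, hb2, hb3]
  exact ⟨hmain, by nlinarith⟩
end

section
/- Let x̄ ∈ ℝ, set μ := x̄³ + x̄ and k := 2x̄²/(1 + x̄²). (i) The Jacobian of the toggle switch vector field f(x, y) = (−x + μ/(1+y²), −y + μ/(1+x²)) at the symmetric equilibrium (x̄, x̄) equals the symmetric matrix J = [[−1, −k], [−k, −1]] (in particular 2μx̄/(1 + x̄²)² = k). (ii) The eigenvalues of J are −1 + k and −1 − k, and J is negative definite (i.e. ⟨J w, w⟩ < 0 for all w ∈ ℝ² \ {0}) if and only if |μ| < 2. -/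
open scoped Matrix

/-- **Toggle switch Jacobian at the symmetric equilibrium.**
Let `x̄ ∈ ℝ`, `μ := x̄³ + x̄` and `k := 2x̄²/(1 + x̄²)`.
(i) The Jacobian of `f(x,y) = (−x + μ/(1+y²), −y + μ/(1+x²))` at `(x̄, x̄)` is the
symmetric matrix `[[−1, −k], [−k, −1]]` (in particular `2μx̄/(1+x̄²)² = k`).
(ii) Its eigenvalues are `−1 + k` and `−1 − k` (via the characteristic polynomial),
and it is negative definite iff `|μ| < 2`. -/
theorem toggleSwitch_jacobian (xb μ k : ℝ)
    (hμ : μ = xb ^ 3 + xb) (hk : k = 2 * xb ^ 2 / (1 + xb ^ 2)) :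
    ((∀ w : ℝ × ℝ,
        fderiv ℝ (fun p : ℝ × ℝ =>
          ((-p.1 + μ / (1 + p.2 ^ 2), -p.2 + μ / (1 + p.1 ^ 2)) : ℝ × ℝ)) (xb, xb) w =
          (-w.1 - k * w.2, -k * w.1 - w.2)) ∧
      2 * μ * xb / (1 + xb ^ 2) ^ 2 = k) ∧
    (Matrix.charpoly !![(-1 : ℝ), -k; -k, -1] =
      (Polynomial.X - Polynomial.C (-1 + k)) * (Polynomial.X - Polynomial.C (-1 - k))) ∧
    ((∀ w : Fin 2 → ℝ, w ≠ 0 → w ⬝ᵥ (!![(-1 : ℝ), -k; -k, -1]).mulVec w < 0) ↔ |μ| < 2) := by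
  have hx2 : (0:ℝ) < 1 + xb ^ 2 := by positivity
  have hx2ne : (1 + xb ^ 2) ≠ 0 := ne_of_gt hx2
  have hkμ : 2 * μ * xb / (1 + xb ^ 2) ^ 2 = k := by
    rw [hμ, hk]; field_simp; ring
  have hk0 : 0 ≤ k := by rw [hk]; positivity
  -- derivative of s ↦ μ / (1 + s²) at xb is -k
  have hgd : HasDerivAt (fun s : ℝ => μ / (1 + s ^ 2)) (-k) xb := by
    have hden : HasDerivAt (fun s : ℝ => 1 + s ^ 2) (2 * xb) xb := by
      simpa using ((hasDerivAt_pow 2 xb).const_add 1)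
    have := (hasDerivAt_const xb μ).div hden hx2ne
    have h' : (0 * (1 + xb ^ 2) - μ * (2 * xb)) / (1 + xb ^ 2) ^ 2 = -k := by
      rw [← hkμ]; ring
    rw [h'] at this; exact this
  have hgf := hgd.hasFDerivAt
  have hA : HasFDerivAt (fun p : ℝ × ℝ => -p.1 + μ / (1 + p.2 ^ 2))
      (-(ContinuousLinearMap.fst ℝ ℝ ℝ) +
        ((1 : ℝ →L[ℝ] ℝ).smulRight (-k)).comp (ContinuousLinearMap.snd ℝ ℝ ℝ)) (xb, xb) :=
    ((hasFDerivAt_fst.neg).add (hgf.comp (f := Prod.snd) (xb, xb) hasFDerivAt_snd))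
  have hB : HasFDerivAt (fun p : ℝ × ℝ => -p.2 + μ / (1 + p.1 ^ 2))
      (-(ContinuousLinearMap.snd ℝ ℝ ℝ) +
        ((1 : ℝ →L[ℝ] ℝ).smulRight (-k)).comp (ContinuousLinearMap.fst ℝ ℝ ℝ)) (xb, xb) :=
    ((hasFDerivAt_snd.neg).add (hgf.comp (f := Prod.fst) (xb, xb) hasFDerivAt_fst))
  have hF := hA.prodMk hB
  have hmuxb : |μ| < 2 ↔ |xb| < 1 := by
    rw [abs_lt, abs_lt]
    constructor
    · rintro ⟨h1, h2⟩
      constructor <;> nlinarith [sq_nonneg xb, sq_nonneg (xb + 1), sq_nonneg (xb - 1)]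
    · rintro ⟨h1, h2⟩
      constructor <;> nlinarith [sq_nonneg xb, sq_nonneg (xb + 1), sq_nonneg (xb - 1)]
  have hk1 : |xb| < 1 ↔ k < 1 := by
    rw [abs_lt, hk, div_lt_one hx2]
    constructor
    · rintro ⟨h1, h2⟩; nlinarith
    · intro h; constructor <;> nlinarith
  refine ⟨⟨?_, hkμ⟩, ?_, ?_⟩
  · intro w
    rw [hF.fderiv]
    simp [ContinuousLinearMap.prod_apply, ContinuousLinearMap.add_apply,
      ContinuousLinearMap.comp_apply, ContinuousLinearMap.neg_apply,
      ContinuousLinearMap.smulRight_apply, ContinuousLinearMap.one_apply, smul_eq_mul]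
    constructor <;> ring
  · rw [Matrix.charpoly, Matrix.det_fin_two]
    simp [Matrix.charmatrix_apply_eq, Matrix.charmatrix_apply_ne, map_neg, map_add, map_sub]
    ring
  · have hform : ∀ w : Fin 2 → ℝ,
        w ⬝ᵥ (!![(-1 : ℝ), -k; -k, -1]).mulVec w
          = -(w 0)^2 - 2 * k * (w 0) * (w 1) - (w 1)^2 := by
      intro w
      simp [dotProduct, Matrix.mulVec, Fin.sum_univ_two]
      ring
    rw [hmuxb, hk1]
    constructor
    · intro h
      have := h ![1, -1] (by
        intro hc
        have := congrFun hc 0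
        simp at this)
      rw [hform] at this
      simp at this
      linarith
    · intro hklt w hw
      rw [hform]
      have hw' : w 0 ≠ 0 ∨ w 1 ≠ 0 := by
        by_contra hc
        push_neg at hc
        apply hw
        funext i
        fin_cases i <;> simp [hc.1, hc.2]
      rcases hw' with h | h
      · have hp : 0 < (w 0) ^ 2 := by positivity
        nlinarith [sq_nonneg (w 0 + w 1), sq_nonneg (w 0 - w 1), sq_nonneg (w 1)]
      · have hp : 0 < (w 1) ^ 2 := by positivity
        nlinarith [sq_nonneg (w 0 + w 1), sq_nonneg (w 0 - w 1), sq_nonneg (w 0)]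
end

section
/- Let γ > 0, θ > 0, ρ ∈ ℝ, and let f(x, y, z) = (γ(y − x), x(ρ − z) − y, xy − θz) be the Lorenz vector field. Define P = diag(1/γ, 1, 1) and ⟨v, w⟩_P := vᵀ P w. Then: (i) for all u = (x, y, z) ∈ ℝ³, ⟨f(u), u⟩_P = −x² + (1 + ρ)xy − y² − θz²; (ii) the quadratic form q(x, y, z) := −x² + (1 + ρ)xy − y² − θz² is negative definite (i.e. q(u) < 0 for all u ≠ 0) if and only if −3 < ρ < 1. -/
open scoped Matrix

/-- **Weighted radial projection of the Lorenz vector field.**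
Let `f(x,y,z) = (γ(y−x), x(ρ−z)−y, xy−θz)` and `P = diag(1/γ, 1, 1)`.
(i) `⟨f(u), u⟩_P = −x² + (1+ρ)xy − y² − θz²` for every `u = (x,y,z)`;
(ii) this quadratic form is negative definite iff `−3 < ρ < 1`. -/
theorem lorenz_weighted_form (γ θ ρ : ℝ) (hγ : 0 < γ) (hθ : 0 < θ) :
    (∀ x y z : ℝ,
      ![γ * (y - x), x * (ρ - z) - y, x * y - θ * z] ⬝ᵥ
          (Matrix.diagonal ![1 / γ, 1, 1]).mulVec ![x, y, z] =
        -x ^ 2 + (1 + ρ) * x * y - y ^ 2 - θ * z ^ 2) ∧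
    ((∀ x y z : ℝ, ¬(x = 0 ∧ y = 0 ∧ z = 0) →
        -x ^ 2 + (1 + ρ) * x * y - y ^ 2 - θ * z ^ 2 < 0) ↔ (-3 < ρ ∧ ρ < 1)) := by
  constructor
  · intro x y z
    simp [dotProduct, Matrix.mulVec, Matrix.diagonal, Fin.sum_univ_three]
    field_simp
    ring
  · constructor
    · intro h
      constructor
      · have h1 := h 1 (-1) 0 (by norm_num)
        nlinarith
      · have h1 := h 1 1 0 (by norm_num)
        nlinarith
    · rintro ⟨h3, h1⟩ x y z hne
      rcases eq_or_ne y 0 with hy | hy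
      · subst hy
        rcases eq_or_ne x 0 with hx | hx
        · subst hx
          have hz : z ≠ 0 := by tauto
          nlinarith [sq_pos_of_ne_zero hz]
        · nlinarith [sq_pos_of_ne_zero hx, sq_nonneg z]
      · nlinarith [sq_pos_of_ne_zero hy, sq_nonneg z, sq_nonneg (2*x - (1+ρ)*y),
          mul_pos (sub_pos.mpr h1) (sub_pos.mpr (neg_lt.mp h3))]
end
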